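/- For any matrix X ∈ ℝ^{m₁×m₂}, the nuclear norm satisfies ‖X‖_* = min over all factorizations X = UVᵀ (U ∈ ℝ^{m₁×R}, V ∈ ℝ^{m₂×R}, any R ≥ rank(X)) of (1/2)(‖U‖_F² + ‖V‖_F²). -/

import Mathlib

open Matrix

/-- The nuclear norm of a real matrix: the sum of its singular values, i.e. the sum of
the square roots of the eigenvalues of `Xᴴ * X`. -/
noncomputable def nuclearNorm {m₁ m₂ : ℕ} (X : Matrix (Fin m₁) (Fin m₂) ℝ) : ℝ :=
  ∑ i, Real.sqrt ((Matrix.isHermitian_conjTranspose_mul_self X).eigenvalues i)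

/-!
Write `X = N Σ Wᵀ` with `W` orthogonal, `Σ = diag σ` the singular values and `N` a partial
isometry that is isometric on the support of `σ`; this thin SVD comes from diagonalizing `XᵀX`.
The factorization `U = N Σ^{1/2}`, `V = W Σ^{1/2}` attains `∑ σ`. Conversely, if `X = U Vᵀ`,
pairing with the partial isometry `Z = N Wᵀ` gives
`∑ σ = tr (Zᵀ U Vᵀ) = ⟪Uᵀ Z, Vᵀ⟫ ≤ ½ (‖Uᵀ Z‖² + ‖V‖²) ≤ ½ (‖U‖² + ‖V‖²)`,
because multiplication by a partial isometry does not increase the Frobenius norm.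
-/

namespace Matrix

section Frobenius

variable {l m n : Type*} [Fintype l] [Fintype m] [Fintype n]

theorem trace_transpose_mul_eq_sum (A B : Matrix m n ℝ) :
    (Aᵀ * B).trace = ∑ i, ∑ j, A i j * B i j := by
  rw [Finset.sum_comm]
  simp [trace, mul_apply]

theorem trace_transpose_mul_self_eq_sum_sq (A : Matrix m n ℝ) :
    (Aᵀ * A).trace = ∑ i, ∑ j, A i j ^ 2 := by
  simp [trace_transpose_mul_eq_sum, sq]

theorem trace_transpose_mul_self_nonneg (A : Matrix m n ℝ) : 0 ≤ (Aᵀ * A).trace := by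
  rw [trace_transpose_mul_self_eq_sum_sq]
  positivity

theorem trace_transpose_mul_le (A B : Matrix m n ℝ) :
    (Aᵀ * B).trace ≤ 1 / 2 * ((Aᵀ * A).trace + (Bᵀ * B).trace) := by
  simp only [trace_transpose_mul_eq_sum, ← Finset.sum_add_distrib, Finset.mul_sum]
  refine Finset.sum_le_sum fun i _ ↦ Finset.sum_le_sum fun j _ ↦ ?_
  nlinarith [sq_nonneg (A i j - B i j)]

def IsPartialIsometry (Z : Matrix m n ℝ) : Prop :=
  Z * Zᵀ * Z = Z

theorem IsPartialIsometry.mul_transpose {N : Matrix m n ℝ} (hN : N.IsPartialIsometry)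
    {W : Matrix l n ℝ} [DecidableEq n] (hW : Wᵀ * W = 1) : (N * Wᵀ).IsPartialIsometry := by
  unfold IsPartialIsometry at hN ⊢
  calc N * Wᵀ * (N * Wᵀ)ᵀ * (N * Wᵀ) = N * (Wᵀ * W) * Nᵀ * N * Wᵀ := by
        simp only [transpose_mul, transpose_transpose, Matrix.mul_assoc]
    _ = N * Wᵀ := by rw [hW, Matrix.mul_one, hN]

theorem IsPartialIsometry.trace_transpose_mul_self_le {Z : Matrix m n ℝ}
    (hZ : Z.IsPartialIsometry) (U : Matrix m l ℝ) :
    ((Uᵀ * Z)ᵀ * (Uᵀ * Z)).trace ≤ (Uᵀ * U).trace := by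
  classical
  set Q := 1 - Z * Zᵀ
  -- `Q` is the orthogonal projection onto the complement of the range of `Z`.
  have hQ : Qᵀ * Q = Q := by
    have hP : Z * Zᵀ * (Z * Zᵀ) = Z * Zᵀ := by rw [← Matrix.mul_assoc, hZ]
    simp only [Q, transpose_sub, transpose_one, transpose_mul, transpose_transpose,
      Matrix.sub_mul, Matrix.mul_sub, Matrix.one_mul, Matrix.mul_one, hP]
    abel
  have hgap : ((Q * U)ᵀ * (Q * U)).trace = (Uᵀ * U).trace - ((Uᵀ * Z)ᵀ * (Uᵀ * Z)).trace :=
    calc ((Q * U)ᵀ * (Q * U)).trace = (Uᵀ * (Qᵀ * Q) * U).trace := by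
          simp only [transpose_mul, Matrix.mul_assoc]
      _ = (Uᵀ * U).trace - ((Uᵀ * Z) * (Uᵀ * Z)ᵀ).trace := by
          simp only [hQ, Q, Matrix.mul_sub, Matrix.sub_mul, trace_sub, Matrix.mul_one,
            transpose_mul, transpose_transpose, Matrix.mul_assoc]
      _ = (Uᵀ * U).trace - ((Uᵀ * Z)ᵀ * (Uᵀ * Z)).trace := by rw [trace_mul_comm (Uᵀ * Z)]
  linarith [trace_transpose_mul_self_nonneg (Q * U)]

theorem IsPartialIsometry.trace_transpose_mul_mul_le {Z : Matrix m n ℝ}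
    (hZ : Z.IsPartialIsometry) (U : Matrix m l ℝ) (V : Matrix n l ℝ) :
    (Zᵀ * (U * Vᵀ)).trace ≤ 1 / 2 * ((Uᵀ * U).trace + (Vᵀ * V).trace) := by
  have hVV : (Vᵀ * V).trace = (Vᵀᵀ * Vᵀ).trace := by
    rw [transpose_transpose, trace_mul_comm]
  have hpair : Zᵀ * (U * Vᵀ) = (Uᵀ * Z)ᵀ * Vᵀ := by
    rw [transpose_mul, transpose_transpose, Matrix.mul_assoc]
  rw [hpair, hVV]
  linarith [trace_transpose_mul_le (Uᵀ * Z) Vᵀ, hZ.trace_transpose_mul_self_le U]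

theorem diagonal_sqrt_mul_diagonal_sqrt [DecidableEq n] {d : n → ℝ} (hd : 0 ≤ d) :
    (diagonal fun i ↦ √(d i)) * (diagonal fun i ↦ √(d i)) = diagonal d := by
  rw [diagonal_mul_diagonal]
  exact congrArg diagonal (funext fun i ↦ Real.mul_self_sqrt (hd i))

theorem trace_transpose_mul_self_mul_diagonal_sqrt [DecidableEq n] {A : Matrix m n ℝ}
    {d : n → ℝ} (hd : 0 ≤ d) (hA : Aᵀ * A * diagonal d = diagonal d) :
    ((A * diagonal fun i ↦ √(d i))ᵀ * (A * diagonal fun i ↦ √(d i))).trace = ∑ i, d i := by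
  rw [transpose_mul, diagonal_transpose, Matrix.mul_assoc, trace_mul_comm, Matrix.mul_assoc,
    Matrix.mul_assoc, diagonal_sqrt_mul_diagonal_sqrt hd, ← Matrix.mul_assoc, hA, trace_diagonal]

end Frobenius

section SingularValues

variable {m n : Type*} [Fintype m] [DecidableEq n] {M : Matrix m n ℝ}

theorem eq_zero_of_transpose_mul_self_eq_diagonal {e : n → ℝ} (h : Mᵀ * M = diagonal e) {j : n}
    (hj : e j = 0) (i : m) : M i j = 0 := by
  have hcol : ∑ k, M k j * M k j = 0 := by
    simpa [mul_apply, hj] using congrFun₂ h j j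
  exact mul_self_eq_zero.mp <|
    (Finset.sum_eq_zero_iff_of_nonneg fun k _ ↦ mul_self_nonneg (M k j)).mp hcol i
      (Finset.mem_univ i)

variable [Fintype n] {d : n → ℝ}

-- Since `0⁻¹ = 0`, `diagonal d⁻¹` is the pseudo-inverse of `diagonal d`; the columns of `M` on
-- which it fails to invert `d` are zero.

theorem mul_diagonal_inv_mul_diagonal (h : Mᵀ * M = diagonal (d * d)) :
    M * diagonal d⁻¹ * diagonal d = M := by
  ext i j
  simp only [mul_diagonal, Pi.inv_apply]
  rcases eq_or_ne (d j) 0 with hj | hj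
  · simp [eq_zero_of_transpose_mul_self_eq_diagonal h (show (d * d) j = 0 by simp [hj]) i]
  · field_simp

theorem transpose_mul_self_mul_diagonal_inv (h : Mᵀ * M = diagonal (d * d)) :
    (M * diagonal d⁻¹)ᵀ * (M * diagonal d⁻¹) = diagonal fun j ↦ (d j)⁻¹ * d j := by
  rw [transpose_mul, diagonal_transpose, Matrix.mul_assoc, ← Matrix.mul_assoc Mᵀ, h,
    diagonal_mul_diagonal, diagonal_mul_diagonal]
  congr 1
  funext j
  rcases eq_or_ne (d j) 0 with hj | hj <;> simp [hj]

theorem transpose_mul_self_mul_diagonal_inv_mul_diagonal (h : Mᵀ * M = diagonal (d * d)) :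
    (M * diagonal d⁻¹)ᵀ * (M * diagonal d⁻¹) * diagonal d = diagonal d := by
  rw [transpose_mul_self_mul_diagonal_inv h, diagonal_mul_diagonal]
  simp only [inv_mul_mul_self]

theorem isPartialIsometry_mul_diagonal_inv (h : Mᵀ * M = diagonal (d * d)) :
    (M * diagonal d⁻¹).IsPartialIsometry := by
  unfold IsPartialIsometry
  rw [Matrix.mul_assoc, transpose_mul_self_mul_diagonal_inv h, Matrix.mul_assoc,
    diagonal_mul_diagonal]
  congr 2
  funext j
  rcases eq_or_ne (d j) 0 with hj | hj <;> simp [hj]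

noncomputable def singularValues (X : Matrix m n ℝ) : n → ℝ :=
  fun i ↦ √((isHermitian_conjTranspose_mul_self X).eigenvalues i)

theorem singularValues_nonneg (X : Matrix m n ℝ) : 0 ≤ X.singularValues :=
  fun _ ↦ Real.sqrt_nonneg _

theorem exists_svd (X : Matrix m n ℝ) :
    ∃ (N : Matrix m n ℝ) (W : Matrix n n ℝ), N.IsPartialIsometry ∧ Wᵀ * W = 1 ∧
      Nᵀ * N * diagonal X.singularValues = diagonal X.singularValues ∧
      X = N * diagonal X.singularValues * Wᵀ := by
  set hX := isHermitian_conjTranspose_mul_self X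
  set W : Matrix n n ℝ := (hX.eigenvectorUnitary : Matrix n n ℝ)
  have hWW : Wᵀ * W = 1 := Unitary.coe_star_mul_self hX.eigenvectorUnitary
  have hWW' : W * Wᵀ = 1 := Unitary.coe_mul_star_self hX.eigenvectorUnitary
  have hdiag : (X * W)ᵀ * (X * W) = diagonal (X.singularValues * X.singularValues) := by
    have h := hX.conjStarAlgAut_star_eigenvectorUnitary
    rw [Unitary.conjStarAlgAut_star_apply] at h
    have hμ : RCLike.ofReal ∘ hX.eigenvalues = X.singularValues * X.singularValues := by
      funext i
      exact (Real.mul_self_sqrt ((posSemidef_conjTranspose_mul_self X).eigenvalues_nonneg i)).symm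
    calc (X * W)ᵀ * (X * W) = star W * (Xᴴ * X) * W := by
          rw [star_eq_conjTranspose, conjTranspose_eq_transpose_of_trivial,
            conjTranspose_eq_transpose_of_trivial, transpose_mul]
          simp only [Matrix.mul_assoc]
      _ = _ := h.trans (congrArg diagonal hμ)
  refine ⟨X * W * diagonal X.singularValues⁻¹, W, isPartialIsometry_mul_diagonal_inv hdiag, hWW,
    transpose_mul_self_mul_diagonal_inv_mul_diagonal hdiag, ?_⟩
  rw [mul_diagonal_inv_mul_diagonal hdiag, Matrix.mul_assoc, hWW', Matrix.mul_one]

theorem sum_singularValues_le_of_eq_mul_transpose {l : Type*} [Fintype l]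
    {X : Matrix m n ℝ} {U : Matrix m l ℝ} {V : Matrix n l ℝ} (h : X = U * Vᵀ) :
    ∑ i, X.singularValues i ≤ 1 / 2 * ((Uᵀ * U).trace + (Vᵀ * V).trace) := by
  obtain ⟨N, W, hN, hW, hNσ, hX⟩ := X.exists_svd
  set σ := X.singularValues
  have hpair : ∑ i, σ i = ((N * Wᵀ)ᵀ * X).trace :=
    calc ∑ i, σ i = (Nᵀ * N * diagonal σ * Wᵀ * W).trace := by
          rw [Matrix.mul_assoc _ Wᵀ, hW, Matrix.mul_one, hNσ, trace_diagonal]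
      _ = ((N * Wᵀ)ᵀ * X).trace := by
          rw [trace_mul_comm, hX]
          simp only [transpose_mul, transpose_transpose, Matrix.mul_assoc]
  rw [hpair, h]
  exact (hN.mul_transpose hW).trace_transpose_mul_mul_le U V

theorem exists_eq_mul_transpose_sum_singularValues (X : Matrix m n ℝ) :
    ∃ (U : Matrix m n ℝ) (V : Matrix n n ℝ), X = U * Vᵀ ∧
      1 / 2 * ((Uᵀ * U).trace + (Vᵀ * V).trace) = ∑ i, X.singularValues i := by
  obtain ⟨N, W, -, hW, hNσ, hX⟩ := X.exists_svd
  set σ := X.singularValues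
  have hσ : 0 ≤ σ := X.singularValues_nonneg
  refine ⟨N * diagonal fun i ↦ √(σ i), W * diagonal fun i ↦ √(σ i), ?_, ?_⟩
  · rw [hX, transpose_mul, diagonal_transpose, ← diagonal_sqrt_mul_diagonal_sqrt hσ]
    simp only [Matrix.mul_assoc]
  · have hWσ : Wᵀ * W * diagonal σ = diagonal σ := by rw [hW, Matrix.one_mul]
    rw [trace_transpose_mul_self_mul_diagonal_sqrt hσ hNσ,
      trace_transpose_mul_self_mul_diagonal_sqrt hσ hWσ]
    ring

end SingularValues

end Matrix

theorem stmt_6 {m₁ m₂ : ℕ} (X : Matrix (Fin m₁) (Fin m₂) ℝ) :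
    IsLeast {c : ℝ | ∃ (R : ℕ) (U : Matrix (Fin m₁) (Fin R) ℝ) (V : Matrix (Fin m₂) (Fin R) ℝ),
        X.rank ≤ R ∧ X = U * Vᵀ ∧
        c = (1 / 2) * ((∑ i, ∑ r, U i r ^ 2) + ∑ j, ∑ r, V j r ^ 2)}
      (nuclearNorm X) := by
  have hnuc : nuclearNorm X = ∑ i, X.singularValues i := rfl
  simp only [← trace_transpose_mul_self_eq_sum_sq]
  refine ⟨?_, ?_⟩
  · obtain ⟨U, V, hUV, hsum⟩ := X.exists_eq_mul_transpose_sum_singularValues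
    exact ⟨m₂, U, V, X.rank_le_width, hUV, hnuc.trans hsum.symm⟩
  · rintro c ⟨R, U, V, -, hUV, rfl⟩
    exact hnuc ▸ sum_singularValues_le_of_eq_mul_transpose hUV
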